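/- arXiv:1910.07273 — 5 statements merged into one kernel-verified Lean document; each statement's English description precedes it below -/
import Mathlib

section
/- Every infinite compact Hausdorff scattered space contains a nontrivial convergent sequence, i.e., an injective sequence converging to some point of the space. -/
/-!
An infinite compact space is not discrete, so the set of non-isolated points is nonempty, and
scatteredness yields a non-isolated point `x` all of whose nearby points are isolated. Take a
compact neighbourhood `K` of `x` inside that region. For every open `V ∋ x`, the compact set
`K \ V` consists of isolated points and is therefore finite; hence any injective sequence in the
infinite set `K \ {x}` eventually enters every such `V`, i.e. converges to `x`.
-/

open Set Filter Topology

/-- A topological space is scattered if every nonempty subset has a point isolated in it. -/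
def IsScatteredSpace (X : Type*) [TopologicalSpace X] : Prop :=
  ∀ S : Set X, S.Nonempty → ∃ x ∈ S, ∃ U : Set X, IsOpen U ∧ U ∩ S = {x}

lemma exists_not_isOpen_singleton_of_infinite (X : Type*) [TopologicalSpace X] [CompactSpace X]
    [Infinite X] : ∃ x : X, ¬IsOpen ({x} : Set X) := by
  by_contra! h
  have : DiscreteTopology X := discreteTopology_iff_isOpen_singleton.mpr h
  have : Finite X := finite_of_compact_of_discrete
  exact not_finite X

lemma IsScatteredSpace.exists_not_isOpen_singleton_eventually_isOpen_singleton
    {X : Type*} [TopologicalSpace X] (h : IsScatteredSpace X) {x₀ : X}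
    (hx₀ : ¬IsOpen ({x₀} : Set X)) :
    ∃ x : X, ¬IsOpen ({x} : Set X) ∧ ∀ᶠ y in 𝓝[≠] x, IsOpen ({y} : Set X) := by
  obtain ⟨x, hx, U, hU, hUS⟩ := h {y | ¬IsOpen ({y} : Set X)} ⟨x₀, hx₀⟩
  have hxU : x ∈ U := (hUS.symm.subset (mem_singleton x)).1
  refine ⟨x, hx, eventually_nhdsWithin_iff.mpr ?_⟩
  filter_upwards [hU.mem_nhds hxU] with y hyU hyx
  by_contra hy
  exact hyx (hUS.subset ⟨hyU, hy⟩)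

lemma IsCompact.finite_of_forall_isOpen_singleton {X : Type*} [TopologicalSpace X] {s : Set X}
    (hs : IsCompact s) (h : ∀ y ∈ s, IsOpen ({y} : Set X)) : s.Finite :=
  hs.finite <| isDiscrete_iff_forall_mem_exists_isOpen.mpr fun y hy =>
    ⟨{y}, h y hy, singleton_inter_of_mem hy⟩

lemma tendsto_nhds_of_injective_of_forall_finite_diff {X : Type*} [TopologicalSpace X]
    {u : ℕ → X} {s : Set X} {x : X} (hu : Function.Injective u) (hus : ∀ n, u n ∈ s)
    (hs : ∀ V, IsOpen V → x ∈ V → (s \ V).Finite) : Tendsto u atTop (𝓝 x) := by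
  rw [tendsto_nhds, ← Nat.cofinite_eq_atTop]
  intro V hV hxV
  exact ((hs V hV hxV).preimage hu.injOn).subset fun n hn => ⟨hus n, hn⟩

lemma exists_injective_tendsto_of_eventually_isOpen_singleton {X : Type*} [TopologicalSpace X]
    [LocallyCompactSpace X] [T1Space X] {x : X} (hx : ¬IsOpen ({x} : Set X))
    (hiso : ∀ᶠ y in 𝓝[≠] x, IsOpen ({y} : Set X)) :
    ∃ u : ℕ → X, Function.Injective u ∧ Tendsto u atTop (𝓝 x) := by
  have : NeBot (𝓝[≠] x) := ⟨fun h => hx ((isOpen_singleton_iff_punctured_nhds x).mpr h)⟩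
  obtain ⟨K, hKx, hKiso, hK⟩ := local_compact_nhds (eventually_nhdsWithin_iff.mp hiso)
  have hA : (K \ {x}).Infinite := (infinite_of_mem_nhds x hKx).sdiff (finite_singleton x)
  let u : ℕ → X := fun n => hA.natEmbedding _ n
  have hu : Function.Injective u := Subtype.val_injective.comp (hA.natEmbedding _).injective
  refine ⟨u, hu, tendsto_nhds_of_injective_of_forall_finite_diff hu
    (fun n => (hA.natEmbedding _ n).2) fun V hV hxV => ?_⟩
  have hfin : (K \ V).Finite := (hK.diff hV).finite_of_forall_isOpen_singleton
    fun y hy => hKiso hy.1 fun hyx => hy.2 (hyx ▸ hxV)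
  exact hfin.subset (sdiff_subset_sdiff_left sdiff_subset)

/-- Every infinite compact Hausdorff scattered space contains a nontrivial convergent
sequence: an injective sequence converging to a point of the space. -/
theorem stmt4 (X : Type*) [TopologicalSpace X] [CompactSpace X] [T2Space X] [Infinite X]
    (h : IsScatteredSpace X) :
    ∃ (u : ℕ → X) (x : X), Function.Injective u ∧ Tendsto u atTop (𝓝 x) := by
  obtain ⟨x₀, hx₀⟩ := exists_not_isOpen_singleton_of_infinite X
  obtain ⟨x, hx, hiso⟩ := h.exists_not_isOpen_singleton_eventually_isOpen_singleton hx₀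
  obtain ⟨u, hu, hux⟩ := exists_injective_tendsto_of_eventually_isOpen_singleton hx hiso
  exact ⟨u, x, hu, hux⟩
end

section
/- Let 0 → Y → Z → X → 0 and 0 → Y → S → X → 0 be short exact sequences of Banach spaces with quotient maps ρ_z : Z → X and ρ_s : S → X. If the pull-back of the second sequence along ρ_z splits and the pull-back of the first sequence along ρ_s splits, then Y ⊕ S is isomorphic to Y ⊕ Z (the diagonal principle). -/
open Set

/-- The pull-back of the sequence `0 → Y → S → X → 0` (with quotient map `ρs`) along an
operator `γ : Z → X`, as a closed subspace of `S × Z`. -/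
noncomputable def pullBack {X S Z : Type*}
    [NormedAddCommGroup X] [NormedSpace ℝ X]
    [NormedAddCommGroup S] [NormedSpace ℝ S]
    [NormedAddCommGroup Z] [NormedSpace ℝ Z]
    (ρs : S →L[ℝ] X) (γ : Z →L[ℝ] X) : Submodule ℝ (S × Z) :=
  LinearMap.ker (((ρs.comp (ContinuousLinearMap.fst ℝ S Z)) -
    (γ.comp (ContinuousLinearMap.snd ℝ S Z)) : S × Z →L[ℝ] X) : S × Z →ₗ[ℝ] X)

/-!
Both pull-backs are the same space `{(s, z) : ρs s = ρz z}` up to swapping the factors. A split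
pull-back of `0 → Y → A → X → 0` along `B → X` is an extension of `B` by `Y` with a retraction,
hence isomorphic to `Y × B`; so this space is isomorphic to both `Y × Z` and `Y × S`.
-/

open Function

section SplitExact

variable {𝕜 M N P : Type*} [NontriviallyNormedField 𝕜]
  [NormedAddCommGroup M] [NormedSpace 𝕜 M] [CompleteSpace M]
  [NormedAddCommGroup N] [NormedSpace 𝕜 N] [CompleteSpace N]
  [NormedAddCommGroup P] [NormedSpace 𝕜 P] [CompleteSpace P]

/-- `l.prod g` is a linear bijection by the algebraic splitting lemma, hence an isomorphism by the
open mapping theorem. -/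
noncomputable def ContinuousLinearEquiv.ofExactOfRetraction {f : M →ₗ[𝕜] N} {g : N →L[𝕜] P}
    (hfg : Exact f g) (hg : Surjective g) (l : N →L[𝕜] M) (hl : ∀ x, l (f x) = x) :
    N ≃L[𝕜] M × P :=
  (hfg.splitInjectiveEquiv hg ⟨l, LinearMap.ext hl⟩).1.toContinuousLinearEquivOfContinuous
    (l.prod g).continuous

end SplitExact

namespace pullBack

variable {X Y A B : Type*}
  [NormedAddCommGroup X] [NormedSpace ℝ X]
  [NormedAddCommGroup Y] [NormedSpace ℝ Y]
  [NormedAddCommGroup A] [NormedSpace ℝ A]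
  [NormedAddCommGroup B] [NormedSpace ℝ B]
  (ρa : A →L[ℝ] X) (ρb : B →L[ℝ] X)

theorem mem_iff {p : A × B} : p ∈ pullBack ρa ρb ↔ ρa p.1 = ρb p.2 := by
  simp [pullBack, sub_eq_zero]

instance [CompleteSpace A] [CompleteSpace B] : CompleteSpace (pullBack ρa ρb) :=
  (ContinuousLinearMap.isClosed_ker _).completeSpace_coe

noncomputable def snd : pullBack ρa ρb →L[ℝ] B :=
  (ContinuousLinearMap.snd ℝ A B).comp (pullBack ρa ρb).subtypeL

theorem snd_surjective (hρa : Surjective ρa) : Surjective (snd ρa ρb) := fun b ↦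
  let ⟨a, ha⟩ := hρa (ρb b)
  ⟨⟨(a, b), (mem_iff ρa ρb).mpr ha⟩, rfl⟩

variable {ρa ρb} {ja : Y →L[ℝ] A}

noncomputable def inl (hexa : Exact ja ρa) (ρb : B →L[ℝ] X) : Y →L[ℝ] pullBack ρa ρb :=
  ((ContinuousLinearMap.inl ℝ A B).comp ja).codRestrict (pullBack ρa ρb) fun y ↦ by
    simp [mem_iff, hexa.apply_apply_eq_zero]

theorem exact_inl_snd (hexa : Exact ja ρa) : Exact (inl hexa ρb) (snd ρa ρb) := by
  rintro ⟨⟨a, b⟩, hab⟩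
  constructor
  · rintro (rfl : b = 0)
    obtain ⟨y, rfl⟩ := (hexa a).mp (by simpa using (mem_iff ρa ρb).mp hab)
    exact ⟨y, rfl⟩
  · rintro ⟨y, hy⟩
    rw [← hy]
    rfl

noncomputable def equivProdOfSplit [CompleteSpace Y] [CompleteSpace A] [CompleteSpace B]
    (hρa : Surjective ρa) (hexa : Exact ja ρa) (P : pullBack ρa ρb →L[ℝ] Y)
    (hP : ∀ (p : pullBack ρa ρb) (y : Y), (p : A × B) = (ja y, 0) → P p = y) :
    pullBack ρa ρb ≃L[ℝ] Y × B :=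
  .ofExactOfRetraction (f := inl hexa ρb) (exact_inl_snd hexa) (snd_surjective ρa ρb hρa) P
    fun y ↦ hP _ y rfl

variable (ρa ρb)

noncomputable def comm : pullBack ρa ρb ≃L[ℝ] pullBack ρb ρa :=
  (ContinuousLinearEquiv.prodComm ℝ A B).ofSubmodules _ _ <| by
    ext ⟨b, a⟩
    simp [mem_iff, eq_comm]

end pullBack

theorem stmt6_general {X Y Z S : Type*}
    [NormedAddCommGroup X] [NormedSpace ℝ X]
    [NormedAddCommGroup Y] [NormedSpace ℝ Y] [CompleteSpace Y]
    [NormedAddCommGroup Z] [NormedSpace ℝ Z] [CompleteSpace Z]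
    [NormedAddCommGroup S] [NormedSpace ℝ S] [CompleteSpace S]
    (jz : Y →L[ℝ] Z) (ρz : Z →L[ℝ] X)
    (js : Y →L[ℝ] S) (ρs : S →L[ℝ] X)
    (hρz : Function.Surjective ρz)
    (hexz : ∀ z : Z, ρz z = 0 ↔ ∃ y : Y, jz y = z)
    (hρs : Function.Surjective ρs)
    (hexs : ∀ s : S, ρs s = 0 ↔ ∃ y : Y, js y = s)
    -- the pull-back of the `S`-sequence along `ρz` splits:
    (hsplit₁ : ∃ P : ↥(pullBack ρs ρz) →L[ℝ] Y,
      ∀ (p : ↥(pullBack ρs ρz)) (y : Y), (p : S × Z) = (js y, 0) → P p = y)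
    -- the pull-back of the `Z`-sequence along `ρs` splits:
    (hsplit₂ : ∃ P : ↥(pullBack ρz ρs) →L[ℝ] Y,
      ∀ (p : ↥(pullBack ρz ρs)) (y : Y), (p : Z × S) = (jz y, 0) → P p = y) :
    Nonempty ((Y × S) ≃L[ℝ] (Y × Z)) := by
  obtain ⟨P₁, hP₁⟩ := hsplit₁
  obtain ⟨P₂, hP₂⟩ := hsplit₂
  have e₁ := pullBack.equivProdOfSplit hρs hexs P₁ hP₁
  have e₂ := pullBack.equivProdOfSplit hρz hexz P₂ hP₂
  exact ⟨e₂.symm.trans ((pullBack.comm ρz ρs).trans e₁)⟩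

/-- The diagonal principle: given two exact sequences `0 → Y → Z → X → 0` and
`0 → Y → S → X → 0` of Banach spaces, if the pull-back of the second along `ρz` splits and
the pull-back of the first along `ρs` splits, then `Y ⊕ S ≃ Y ⊕ Z`. -/
theorem stmt6 {X Y Z S : Type*}
    [NormedAddCommGroup X] [NormedSpace ℝ X] [CompleteSpace X]
    [NormedAddCommGroup Y] [NormedSpace ℝ Y] [CompleteSpace Y]
    [NormedAddCommGroup Z] [NormedSpace ℝ Z] [CompleteSpace Z]
    [NormedAddCommGroup S] [NormedSpace ℝ S] [CompleteSpace S]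
    (jz : Y →L[ℝ] Z) (ρz : Z →L[ℝ] X)
    (js : Y →L[ℝ] S) (ρs : S →L[ℝ] X)
    (hjz : Function.Injective jz) (hρz : Function.Surjective ρz)
    (hexz : ∀ z : Z, ρz z = 0 ↔ ∃ y : Y, jz y = z)
    (hjs : Function.Injective js) (hρs : Function.Surjective ρs)
    (hexs : ∀ s : S, ρs s = 0 ↔ ∃ y : Y, js y = s)
    -- the pull-back of the `S`-sequence along `ρz` splits:
    (hsplit₁ : ∃ P : ↥(pullBack ρs ρz) →L[ℝ] Y,
      ∀ (p : ↥(pullBack ρs ρz)) (y : Y), (p : S × Z) = (js y, 0) → P p = y)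
    -- the pull-back of the `Z`-sequence along `ρs` splits:
    (hsplit₂ : ∃ P : ↥(pullBack ρz ρs) →L[ℝ] Y,
      ∀ (p : ↥(pullBack ρz ρs)) (y : Y), (p : Z × S) = (jz y, 0) → P p = y) :
    Nonempty ((Y × S) ≃L[ℝ] (Y × Z)) :=
  stmt6_general jz ρz js ρs hρz hexz hρs hexs hsplit₁ hsplit₂
end

section
/- The Stone space of the Boolean algebra 𝔄 generated by the chain {P_x : x ∈ (0,1)} together with the identification of ultrafilters with intervals is homeomorphic to the double arrow space 𝕊 = ((0,1] × {0}) ∪ ([0,1) × {1}) with the order topology of the lexicographic order. -/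
open Set

/-- The Boolean algebra of subsets of `α` generated by a family `G`. -/
def genBoolAlg {α : Type*} (G : Set (Set α)) : Set (Set α) :=
  ⋂₀ {𝔅 : Set (Set α) | G ⊆ 𝔅 ∧ ∅ ∈ 𝔅 ∧ (∀ a ∈ 𝔅, aᶜ ∈ 𝔅) ∧
    ∀ a ∈ 𝔅, ∀ b ∈ 𝔅, a ∪ b ∈ 𝔅}

/-- `F` is an ultrafilter on the algebra `𝔄` of subsets of `α`. -/
def IsUltrafilterOn {α : Type*} (𝔄 F : Set (Set α)) : Prop :=
  F ⊆ 𝔄 ∧ ∅ ∉ F ∧ (∀ a ∈ F, ∀ b ∈ F, a ∩ b ∈ F) ∧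
  (∀ a ∈ F, ∀ b ∈ 𝔄, a ⊆ b → b ∈ F) ∧ ∀ a ∈ 𝔄, a ∈ F ∨ aᶜ ∈ F

/-- The Stone space of an algebra `𝔄` of subsets of `α`: ultrafilters on `𝔄`. -/
def StoneSpaceOfAlg {α : Type*} (𝔄 : Set (Set α)) : Type _ :=
  {F : Set (Set α) // IsUltrafilterOn 𝔄 F}

/-- The Stone topology, generated by the sets `{F : a ∈ F}` for `a ∈ 𝔄`. -/
instance {α : Type*} (𝔄 : Set (Set α)) : TopologicalSpace (StoneSpaceOfAlg 𝔄) :=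
  TopologicalSpace.generateFrom
    {s | ∃ a ∈ 𝔄, s = {F : StoneSpaceOfAlg 𝔄 | a ∈ F.1}}

/-- The double arrow space `𝕊 = ((0,1] × {0}) ∪ ([0,1) × {1})`, as a subset of
`ℝ ×ₗ Bool` with the lexicographic order. -/
def DoubleArrow : Type :=
  {p : ℝ ×ₗ Bool // ((ofLex p).2 = false ∧ (ofLex p).1 ∈ Set.Ioc (0:ℝ) 1) ∨
    ((ofLex p).2 = true ∧ (ofLex p).1 ∈ Set.Ico (0:ℝ) 1)}

noncomputable instance : LinearOrder DoubleArrow := by unfold DoubleArrow; infer_instance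

/-- The double arrow space carries the order topology. -/
noncomputable instance : TopologicalSpace DoubleArrow := Preorder.topology DoubleArrow

instance : OrderTopology DoubleArrow := ⟨rfl⟩

/-!
The point `(y, 0)` of the double arrow corresponds to the ultrafilter of those sets of `𝔄` that
contain every `q ∈ Q` of some left neighbourhood `(y - ε, y)`, and `(y, 1)` to the one defined by
right neighbourhoods `(y, y + ε)`: density of `Q` makes these filters proper, and since they decide
every generator `P x`, they decide every set of `𝔄`. An ultrafilter on `𝔄` is determined by its
cut `{x | P x ∈ F}`, an upper set of `(0,1)`, and every upper set of `(0,1)` is the cut of exactly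
one point of the double arrow. Under this bijection `{F | P x ∈ F}` corresponds to the clopen
interval `(-∞, (x,0)]`, and these sets control both topologies: the Stone topology because `𝔄` is
generated by the `P x`, the order topology because the points `(x,0)` are order-dense.
-/

open Filter Topology

section GenBoolAlg

variable {α : Type*} {G : Set (Set α)} {a b : Set α}

theorem subset_genBoolAlg : G ⊆ genBoolAlg G :=
  fun _ hs _ h𝔅 => h𝔅.1 hs

theorem empty_mem_genBoolAlg : ∅ ∈ genBoolAlg G :=
  fun _ h𝔅 => h𝔅.2.1

theorem compl_mem_genBoolAlg (ha : a ∈ genBoolAlg G) : aᶜ ∈ genBoolAlg G :=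
  fun 𝔅 h𝔅 => h𝔅.2.2.1 a (ha 𝔅 h𝔅)

theorem union_mem_genBoolAlg (ha : a ∈ genBoolAlg G) (hb : b ∈ genBoolAlg G) :
    a ∪ b ∈ genBoolAlg G :=
  fun 𝔅 h𝔅 => h𝔅.2.2.2 a (ha 𝔅 h𝔅) b (hb 𝔅 h𝔅)

theorem inter_mem_genBoolAlg (ha : a ∈ genBoolAlg G) (hb : b ∈ genBoolAlg G) :
    a ∩ b ∈ genBoolAlg G := by
  simpa only [compl_union, compl_compl] using
    compl_mem_genBoolAlg (union_mem_genBoolAlg (compl_mem_genBoolAlg ha) (compl_mem_genBoolAlg hb))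

theorem genBoolAlg_induction {motive : (a : Set α) → a ∈ genBoolAlg G → Prop}
    (basic : ∀ s (hs : s ∈ G), motive s (subset_genBoolAlg hs))
    (empty : motive ∅ empty_mem_genBoolAlg)
    (compl : ∀ a ha, motive a ha → motive aᶜ (compl_mem_genBoolAlg ha))
    (union : ∀ a b ha hb, motive a ha → motive b hb →
      motive (a ∪ b) (union_mem_genBoolAlg ha hb))
    (ha : a ∈ genBoolAlg G) : motive a ha := by
  have hsub : genBoolAlg G ⊆ {a | ∃ ha, motive a ha} := sInter_subset_of_mem
    ⟨fun s hs => ⟨_, basic s hs⟩, ⟨_, empty⟩, fun a ⟨ha, h⟩ => ⟨_, compl a ha h⟩,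
      fun a ⟨ha, h⟩ b ⟨hb, h'⟩ => ⟨_, union a b ha hb h h'⟩⟩
  obtain ⟨_, h⟩ := hsub ha
  exact h

end GenBoolAlg

namespace IsUltrafilterOn

variable {α : Type*} {𝔄 F : Set (Set α)} {a b : Set α}

theorem compl_mem_iff (hF : IsUltrafilterOn 𝔄 F) (ha : a ∈ 𝔄) : aᶜ ∈ F ↔ a ∉ F := by
  refine ⟨fun hc h => hF.2.1 ?_, (hF.2.2.2.2 a ha).resolve_left⟩
  simpa only [inter_compl_self] using hF.2.2.1 a h aᶜ hc

theorem union_mem_iff (hF : IsUltrafilterOn 𝔄 F) (ha : a ∈ 𝔄) (hb : b ∈ 𝔄) (hab : a ∪ b ∈ 𝔄) :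
    a ∪ b ∈ F ↔ a ∈ F ∨ b ∈ F := by
  refine ⟨fun h => ?_, ?_⟩
  · by_contra! hn
    have hc := hF.2.2.1 _ ((hF.compl_mem_iff ha).2 hn.1) _ ((hF.compl_mem_iff hb).2 hn.2)
    rw [← compl_union] at hc
    exact hF.2.1 (by simpa only [inter_compl_self] using hF.2.2.1 _ h _ hc)
  · rintro (h | h)
    exacts [hF.2.2.2.1 a h _ hab subset_union_left, hF.2.2.2.1 b h _ hab subset_union_right]

theorem eq_of_forall_mem_iff {G : Set (Set α)} {F' : Set (Set α)}
    (hF : IsUltrafilterOn (genBoolAlg G) F) (hF' : IsUltrafilterOn (genBoolAlg G) F')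
    (hG : ∀ s ∈ G, s ∈ F ↔ s ∈ F') : F = F' := by
  have key : ∀ a ∈ genBoolAlg G, a ∈ F ↔ a ∈ F' := fun a ha => by
    induction ha using genBoolAlg_induction with
    | basic s hs => exact hG s hs
    | empty => exact iff_of_false hF.2.1 hF'.2.1
    | compl a ha h => rw [hF.compl_mem_iff ha, hF'.compl_mem_iff ha, h]
    | union a b ha hb h h' =>
      have hab := union_mem_genBoolAlg ha hb
      rw [hF.union_mem_iff ha hb hab, hF'.union_mem_iff ha hb hab, h, h']
  ext a
  exact ⟨fun h => (key a (hF.1 h)).1 h, fun h => (key a (hF'.1 h)).2 h⟩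

end IsUltrafilterOn

theorem Filter.isUltrafilterOn_genBoolAlg {α : Type*} {G : Set (Set α)} (l : Filter α) [l.NeBot]
    (h : ∀ s ∈ G, s ∈ l ∨ sᶜ ∈ l) :
    IsUltrafilterOn (genBoolAlg G) {a ∈ genBoolAlg G | a ∈ l} := by
  refine ⟨fun a ha => ha.1, fun h => l.empty_notMem h.2, ?_, ?_, fun a ha => ?_⟩
  · exact fun a ⟨ha, hal⟩ b ⟨hb, hbl⟩ => ⟨inter_mem_genBoolAlg ha hb, inter_mem hal hbl⟩
  · exact fun a ⟨_, hal⟩ b hb hab => ⟨hb, mem_of_superset hal hab⟩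
  have : a ∈ l ∨ aᶜ ∈ l := by
    induction ha using genBoolAlg_induction with
    | basic s hs => exact h s hs
    | empty => exact Or.inr (by simp)
    | compl a _ h => rwa [compl_compl, or_comm]
    | union a b _ _ h h' =>
      rw [compl_union]
      rcases h with h | h
      · exact Or.inl (mem_of_superset h subset_union_left)
      rcases h' with h' | h'
      · exact Or.inl (mem_of_superset h' subset_union_right)
      · exact Or.inr (inter_mem h h')
  exact this.imp (fun h => ⟨ha, h⟩) (fun h => ⟨compl_mem_genBoolAlg ha, h⟩)

namespace StoneSpaceOfAlg

variable {α : Type*}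

theorem isOpen_setOf_mem {𝔄 : Set (Set α)} {a : Set α} (ha : a ∈ 𝔄) :
    IsOpen {F : StoneSpaceOfAlg 𝔄 | a ∈ F.1} :=
  TopologicalSpace.isOpen_generateFrom_of_mem ⟨a, ha, rfl⟩

theorem isClopen_setOf_mem {𝔄 : Set (Set α)} {a : Set α} (ha : a ∈ 𝔄) (hac : aᶜ ∈ 𝔄) :
    IsClopen {F : StoneSpaceOfAlg 𝔄 | a ∈ F.1} := by
  refine ⟨?_, isOpen_setOf_mem ha⟩
  have : {F : StoneSpaceOfAlg 𝔄 | a ∈ F.1}ᶜ = {F | aᶜ ∈ F.1} := by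
    ext F
    exact (F.2.compl_mem_iff ha).symm
  rw [← isOpen_compl_iff, this]
  exact isOpen_setOf_mem hac

theorem continuous_of_isClopen_preimage {X : Type*} [TopologicalSpace X] {G : Set (Set α)}
    {f : X → StoneSpaceOfAlg (genBoolAlg G)} (h : ∀ s ∈ G, IsClopen (f ⁻¹' {F | s ∈ F.1})) :
    Continuous f := by
  refine continuous_generateFrom_iff.2 ?_
  rintro _ ⟨a, ha, rfl⟩
  refine IsClopen.isOpen ?_
  induction ha using genBoolAlg_induction with
  | basic s hs => exact h s hs
  | empty =>
    convert isClopen_empty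
    exact eq_empty_of_forall_notMem fun x hx => (f x).2.2.1 hx
  | compl a ha h =>
    convert h.compl using 1
    ext x
    exact (f x).2.compl_mem_iff ha
  | union a b ha hb h h' =>
    convert h.union h' using 1
    ext x
    exact (f x).2.union_mem_iff ha hb (union_mem_genBoolAlg ha hb)

end StoneSpaceOfAlg

namespace DoubleArrow

def fst (p : DoubleArrow) : ℝ := (ofLex p.1).1

def snd (p : DoubleArrow) : Bool := (ofLex p.1).2

theorem le_iff {p q : DoubleArrow} : p ≤ q ↔ p.fst < q.fst ∨ p.fst = q.fst ∧ p.snd ≤ q.snd :=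
  Subtype.coe_le_coe.symm.trans Prod.Lex.le_iff

theorem lt_iff {p q : DoubleArrow} : p < q ↔ p.fst < q.fst ∨ p.fst = q.fst ∧ p.snd < q.snd :=
  Subtype.coe_lt_coe.symm.trans Prod.Lex.lt_iff

theorem fst_pos_of_snd_eq_false {p : DoubleArrow} (h : p.snd = false) : 0 < p.fst := by
  rcases p.2 with h' | h'
  exacts [h'.2.1, absurd (h'.1.symm.trans h) (by decide)]

theorem fst_lt_one_of_snd_eq_true {p : DoubleArrow} (h : p.snd = true) : p.fst < 1 := by
  rcases p.2 with h' | h'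
  exacts [absurd (h'.1.symm.trans h) (by decide), h'.2.2]

theorem fst_mem_Icc (p : DoubleArrow) : p.fst ∈ Icc (0 : ℝ) 1 := by
  rcases p.2 with h | h
  exacts [Ioc_subset_Icc_self h.2, Ico_subset_Icc_self h.2]

def pt (x : Ioo (0 : ℝ) 1) : DoubleArrow :=
  ⟨toLex (x, false), Or.inl ⟨rfl, x.2.1, x.2.2.le⟩⟩

theorem le_pt_iff {p : DoubleArrow} {x : Ioo (0 : ℝ) 1} :
    p ≤ pt x ↔ p.fst < x ∨ p.fst = x ∧ p.snd = false := by
  rw [le_iff]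
  simp only [fst, snd, pt, ofLex_toLex, Bool.le_iff_imp, Bool.false_eq_true, imp_false,
    Bool.not_eq_true]

theorem isClopen_Iic_pt (x : Ioo (0 : ℝ) 1) : IsClopen (Iic (pt x)) := by
  refine ⟨isClosed_Iic, ?_⟩
  have : Iic (pt x) = Iio ⟨toLex (x, true), Or.inr ⟨rfl, x.2.1.le, x.2.2⟩⟩ := by
    ext p
    refine le_pt_iff.trans (Iff.trans ?_ lt_iff.symm)
    simp only [fst, snd, ofLex_toLex, Bool.lt_iff, and_true]
  rw [this]
  exact isOpen_Iio

theorem exists_pt_between {p q : DoubleArrow} (h : p < q) :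
    ∃ x, p ≤ pt x ∧ pt x < q := by
  have hp := p.fst_mem_Icc
  have hq := q.fst_mem_Icc
  rcases lt_iff.1 h with h | ⟨h, hb⟩
  · refine ⟨⟨(p.fst + q.fst) / 2, by linarith [hp.1], by linarith [hq.2]⟩, ?_, ?_⟩
    · exact le_pt_iff.2 (Or.inl (by dsimp only; linarith))
    · exact lt_of_not_ge fun h' => by
        rcases le_pt_iff.1 h' with h' | ⟨h', -⟩ <;> dsimp only at h' <;> linarith
  · obtain ⟨hp', hq'⟩ := Bool.lt_iff.1 hb
    refine ⟨⟨p.fst, fst_pos_of_snd_eq_false hp', h ▸ fst_lt_one_of_snd_eq_true hq'⟩,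
      le_pt_iff.2 (Or.inr ⟨rfl, hp'⟩), lt_of_not_ge fun h' => ?_⟩
    rcases le_pt_iff.1 h' with h' | ⟨-, h'⟩
    exacts [h'.ne h.symm, absurd (hq'.symm.trans h') (by decide)]

theorem continuous_of_isClopen_preimage {X : Type*} [TopologicalSpace X] {f : X → DoubleArrow}
    (hf : ∀ x, IsClopen (f ⁻¹' Iic (pt x))) : Continuous f := by
  refine continuous_generateFrom_iff.2 ?_
  rintro _ ⟨p, rfl | rfl⟩ <;> refine isOpen_iff_forall_mem_open.2 fun y hy => ?_
  · obtain ⟨x, hpx, hxy⟩ := exists_pt_between hy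
    exact ⟨(f ⁻¹' Iic (pt x))ᶜ, fun z hz => hpx.trans_lt (not_le.1 hz),
      (hf x).isClosed.isOpen_compl, not_le.2 hxy⟩
  · obtain ⟨x, hyx, hxp⟩ := exists_pt_between hy
    exact ⟨f ⁻¹' Iic (pt x), fun z hz => lt_of_le_of_lt hz hxp, (hf x).isOpen, hyx⟩

theorem exists_forall_le_pt_iff {I : Set (Ioo (0 : ℝ) 1)} (hI : IsUpperSet I) :
    ∃ p, ∀ x, p ≤ pt x ↔ x ∈ I := by
  set S : Set ℝ := insert 1 (Subtype.val '' I)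
  have hS0 : ∀ z ∈ S, 0 ≤ z := by rintro _ (rfl | ⟨x, -, rfl⟩); exacts [zero_le_one, x.2.1.le]
  have hS : BddBelow S := ⟨0, hS0⟩
  have hSne : S.Nonempty := insert_nonempty _ _
  have hle : ∀ x ∈ I, sInf S ≤ x := fun x hx => csInf_le hS (mem_insert_of_mem _ ⟨x, hx, rfl⟩)
  have hy0 : 0 ≤ sInf S := le_csInf hSne hS0
  have hy1 : sInf S ≤ 1 := csInf_le hS (mem_insert _ _)
  by_cases hmin : (∃ x ∈ I, (x : ℝ) = sInf S) ∨ sInf S = 1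
  · have hy0' : 0 < sInf S := by
      rcases hmin with ⟨x, -, hx⟩ | h
      exacts [hx ▸ x.2.1, h ▸ one_pos]
    refine ⟨⟨toLex (sInf S, false), Or.inl ⟨rfl, hy0', hy1⟩⟩, fun x => le_pt_iff.trans ?_⟩
    simp only [fst, snd, ofLex_toLex, and_true, ← le_iff_lt_or_eq]
    refine ⟨fun h => ?_, hle x⟩
    rcases hmin with ⟨x₀, hx₀, hx₀y⟩ | h1
    · exact hI (Subtype.coe_le_coe.1 (hx₀y ▸ h)) hx₀
    · exact absurd x.2.2 (h1 ▸ h).not_gt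
  · push Not at hmin
    refine ⟨⟨toLex (sInf S, true), Or.inr ⟨rfl, hy0, hy1.lt_of_ne hmin.2⟩⟩,
      fun x => le_pt_iff.trans ?_⟩
    simp only [fst, snd, ofLex_toLex, Bool.true_eq_false, and_false, or_false]
    refine ⟨fun h => ?_, fun hx => (hle x hx).lt_of_ne (hmin.1 x hx).symm⟩
    obtain ⟨_, (rfl | ⟨x₀, hx₀, rfl⟩), hx₀x⟩ := exists_lt_of_csInf_lt hSne h
    · exact absurd x.2.2 hx₀x.not_gt
    · exact hI (Subtype.coe_le_coe.1 hx₀x.le) hx₀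

/-- The paper's `I(F)` of the ultrafilter corresponding to `p`. -/
def cut (p : DoubleArrow) : Set ℝ := if p.snd = false then Ico p.fst 1 else Ioo p.fst 1

theorem le_pt_iff_mem_cut {p : DoubleArrow} {x : Ioo (0 : ℝ) 1} : p ≤ pt x ↔ (x : ℝ) ∈ p.cut := by
  rw [le_pt_iff, cut]
  cases p.snd <;> simp [x.2.2, le_iff_lt_or_eq]

def sideNhds (p : DoubleArrow) : Filter ℝ := if p.snd then 𝓝[>] p.fst else 𝓝[<] p.fst

theorem Iic_mem_sideNhds {p : DoubleArrow} {x : Ioo (0 : ℝ) 1} (h : p ≤ pt x) :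
    Iic (x : ℝ) ∈ p.sideNhds := by
  rw [sideNhds]
  rcases le_pt_iff.1 h with h | ⟨h, hb⟩
  · split_ifs
    exacts [nhdsWithin_le_nhds (Iic_mem_nhds h),
      mem_of_superset self_mem_nhdsWithin (Iio_subset_Iic_self.trans (Iic_subset_Iic.2 h.le))]
  · rw [hb, ← h]
    exact mem_of_superset self_mem_nhdsWithin Iio_subset_Iic_self

theorem compl_Iic_mem_sideNhds {p : DoubleArrow} {x : Ioo (0 : ℝ) 1} (h : pt x < p) :
    (Iic (x : ℝ))ᶜ ∈ p.sideNhds := by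
  have h' := h.not_ge
  rw [le_pt_iff, not_or, not_lt, not_and, Bool.not_eq_false] at h'
  rw [sideNhds, compl_Iic]
  rcases h'.1.lt_or_eq with h | h
  · split_ifs
    exacts [mem_of_superset self_mem_nhdsWithin (Ioi_subset_Ioi h.le),
      nhdsWithin_le_nhds (Ioi_mem_nhds h)]
  · rw [h'.2 h.symm, h]
    exact self_mem_nhdsWithin

end DoubleArrow

def chainGenerators (Q : Set ℝ) : Set (Set Q) :=
  {s | ∃ x ∈ Ioo (0 : ℝ) 1, s = {q : Q | (q : ℝ) ≤ x}}

section ChainAlgebra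

variable {Q : Set ℝ} (hQ : ∀ a b : ℝ, 0 ≤ a → a < b → b ≤ 1 → ∃ q ∈ Q, a < q ∧ q < b)
include hQ

theorem DoubleArrow.comap_sideNhds_neBot (p : DoubleArrow) :
    (comap ((↑) : Q → ℝ) p.sideNhds).NeBot := by
  refine comap_neBot fun t ht => ?_
  have hp := p.fst_mem_Icc
  rw [DoubleArrow.sideNhds] at ht
  split_ifs at ht with hb
  · obtain ⟨u, hu, hut⟩ := mem_nhdsGT_iff_exists_Ioo_subset.1 ht
    obtain ⟨q, hq, hq₁, hq₂⟩ := hQ _ (min u 1) hp.1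
      (lt_min hu (p.fst_lt_one_of_snd_eq_true hb)) (min_le_right _ _)
    exact ⟨⟨q, hq⟩, hut ⟨hq₁, hq₂.trans_le (min_le_left _ _)⟩⟩
  · obtain ⟨l, hl, hlt⟩ := mem_nhdsLT_iff_exists_Ioo_subset.1 ht
    obtain ⟨q, hq, hq₁, hq₂⟩ := hQ (max l 0) _ (le_max_right _ _)
      (max_lt hl (p.fst_pos_of_snd_eq_false (by simpa using hb))) hp.2
    exact ⟨⟨q, hq⟩, hlt ⟨(le_max_left _ _).trans_lt hq₁, hq₂⟩⟩

theorem DoubleArrow.setOf_le_mem_comap_sideNhds_iff (p : DoubleArrow) (x : Ioo (0 : ℝ) 1) :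
    {q : Q | (q : ℝ) ≤ x} ∈ comap (↑) p.sideNhds ↔ p ≤ pt x := by
  refine ⟨fun h => le_of_not_gt fun hlt => ?_, fun h => preimage_mem_comap (Iic_mem_sideNhds h)⟩
  have hc : {q : Q | (q : ℝ) ≤ x}ᶜ ∈ comap (↑) p.sideNhds :=
    preimage_mem_comap (compl_Iic_mem_sideNhds hlt)
  have := p.comap_sideNhds_neBot hQ
  exact empty_notMem _ (by simpa only [inter_compl_self] using inter_mem h hc)

def toStone (p : DoubleArrow) : StoneSpaceOfAlg (genBoolAlg (chainGenerators Q)) :=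
  haveI := p.comap_sideNhds_neBot hQ
  ⟨_, isUltrafilterOn_genBoolAlg _ fun s ⟨x, hx, hs⟩ => by
    subst hs
    rcases le_or_gt p (DoubleArrow.pt ⟨x, hx⟩) with h | h
    · exact Or.inl ((p.setOf_le_mem_comap_sideNhds_iff hQ _).2 h)
    · exact Or.inr (preimage_mem_comap (DoubleArrow.compl_Iic_mem_sideNhds h))⟩

theorem mem_toStone_iff {p : DoubleArrow} {x : Ioo (0 : ℝ) 1} :
    {q : Q | (q : ℝ) ≤ x} ∈ (toStone hQ p).1 ↔ p ≤ DoubleArrow.pt x :=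
  ⟨fun h => (p.setOf_le_mem_comap_sideNhds_iff hQ x).1 h.2,
    fun h => ⟨subset_genBoolAlg ⟨x, x.2, rfl⟩, (p.setOf_le_mem_comap_sideNhds_iff hQ x).2 h⟩⟩

theorem preimage_toStone_setOf_mem (x : Ioo (0 : ℝ) 1) :
    toStone hQ ⁻¹' {F | {q : Q | (q : ℝ) ≤ x} ∈ F.1} = Iic (DoubleArrow.pt x) :=
  ext fun _ => mem_toStone_iff hQ

theorem setOf_mem_toStone (p : DoubleArrow) :
    {x ∈ Ioo (0 : ℝ) 1 | {q : Q | (q : ℝ) ≤ x} ∈ (toStone hQ p).1} = p.cut ∩ Ioo 0 1 := by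
  ext x
  simp only [mem_sep_iff, mem_inter_iff]
  refine ⟨fun ⟨hx, h⟩ => ⟨?_, hx⟩, fun ⟨h, hx⟩ => ⟨hx, ?_⟩⟩
  · exact DoubleArrow.le_pt_iff_mem_cut.1 ((mem_toStone_iff hQ (x := ⟨x, hx⟩)).1 h)
  · exact (mem_toStone_iff hQ (x := ⟨x, hx⟩)).2 (DoubleArrow.le_pt_iff_mem_cut.2 h)

theorem toStone_injective : Function.Injective (toStone hQ) := by
  refine Function.Injective.of_lt_imp_ne fun p q hpq h => ?_
  obtain ⟨x, hpx, hxq⟩ := DoubleArrow.exists_pt_between hpq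
  exact hxq.not_ge ((mem_toStone_iff hQ).1 (h ▸ (mem_toStone_iff hQ).2 hpx))

theorem toStone_surjective : Function.Surjective (toStone hQ) := by
  intro F
  have hI : IsUpperSet {x : Ioo (0 : ℝ) 1 | {q : Q | (q : ℝ) ≤ x} ∈ F.1} :=
    fun x y hxy hx => F.2.2.2.2.1 _ hx _ (subset_genBoolAlg ⟨y, y.2, rfl⟩)
      fun q hq => hq.trans (Subtype.coe_le_coe.2 hxy)
  obtain ⟨p, hp⟩ := DoubleArrow.exists_forall_le_pt_iff hI
  refine ⟨p, Subtype.ext ((toStone hQ p).2.eq_of_forall_mem_iff F.2 ?_)⟩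
  rintro _ ⟨x, hx, rfl⟩
  exact (mem_toStone_iff hQ (x := ⟨x, hx⟩)).trans (hp _)

noncomputable def toStoneHomeomorph :
    DoubleArrow ≃ₜ StoneSpaceOfAlg (genBoolAlg (chainGenerators Q)) where
  toEquiv := Equiv.ofBijective _ ⟨toStone_injective hQ, toStone_surjective hQ⟩
  continuous_toFun := StoneSpaceOfAlg.continuous_of_isClopen_preimage fun _ ⟨x, hx, hs⟩ => by
    subst hs
    exact preimage_toStone_setOf_mem hQ ⟨x, hx⟩ ▸ DoubleArrow.isClopen_Iic_pt _
  continuous_invFun := DoubleArrow.continuous_of_isClopen_preimage fun x => by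
    have hx : {q : Q | (q : ℝ) ≤ x} ∈ genBoolAlg (chainGenerators Q) :=
      subset_genBoolAlg ⟨x, x.2, rfl⟩
    rw [← preimage_toStone_setOf_mem hQ x]
    convert StoneSpaceOfAlg.isClopen_setOf_mem hx (compl_mem_genBoolAlg hx) using 1
    exact Equiv.symm_preimage_preimage
      (Equiv.ofBijective _ ⟨toStone_injective hQ, toStone_surjective hQ⟩) _

end ChainAlgebra

theorem stmt15_general (Q : Set ℝ)
    (hQdense : ∀ a b : ℝ, 0 ≤ a → a < b → b ≤ 1 → ∃ q ∈ Q, a < q ∧ q < b)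
    (P : ℝ → Set ↥Q) (hP : ∀ x : ℝ, P x = {q : ↥Q | (q : ℝ) ≤ x})
    (𝔄 : Set (Set ↥Q)) (h𝔄 : 𝔄 = genBoolAlg {s | ∃ x ∈ Ioo (0:ℝ) 1, s = P x}) :
    ∃ h : DoubleArrow ≃ₜ StoneSpaceOfAlg 𝔄, ∀ p : DoubleArrow,
      {x ∈ Ioo (0:ℝ) 1 | P x ∈ (h p).1} =
        (if (ofLex p.1).2 = false then Ico ((ofLex p.1).1) 1
         else Ioo ((ofLex p.1).1) 1) ∩ Ioo 0 1 := by
  obtain rfl : P = fun x => {q : ↥Q | (q : ℝ) ≤ x} := funext hP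
  subst h𝔄
  exact ⟨toStoneHomeomorph hQdense, setOf_mem_toStone hQdense⟩

/-- The Stone space of the algebra generated by the chain `{P x : x ∈ (0,1)}` is
homeomorphic to the double arrow space, via the map sending `(y,0)` to the ultrafilter
`F` with `I(F) = [y,1)` and `(y,1)` to the ultrafilter with `I(F) = (y,1)`. -/
theorem stmt15 (Q : Set ℝ) (hQc : Q.Countable) (hQsub : Q ⊆ Ioo (0:ℝ) 1)
    (hQdense : ∀ a b : ℝ, 0 ≤ a → a < b → b ≤ 1 → ∃ q ∈ Q, a < q ∧ q < b)
    (P : ℝ → Set ↥Q) (hP : ∀ x : ℝ, P x = {q : ↥Q | (q : ℝ) ≤ x})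
    (𝔄 : Set (Set ↥Q)) (h𝔄 : 𝔄 = genBoolAlg {s | ∃ x ∈ Ioo (0:ℝ) 1, s = P x}) :
    ∃ h : DoubleArrow ≃ₜ StoneSpaceOfAlg 𝔄, ∀ p : DoubleArrow,
      {x ∈ Ioo (0:ℝ) 1 | P x ∈ (h p).1} =
        (if (ofLex p.1).2 = false then Ico ((ofLex p.1).1) 1
         else Ioo ((ofLex p.1).1) 1) ∩ Ioo 0 1 :=
  stmt15_general Q hQdense P hP 𝔄 h𝔄
end

section
/- For x ∈ (0,1) irrational, let S_x = {Σ_{k=0}^{n} i^x_k / 2^{k+1} : n ∈ ω} \ {0}, where 0.i^x_0 i^x_1 … is the binary expansion of x with infinitely many 1's. Then the map x ↦ S_x, from (0,1) \ ℚ into 2^{ℚ∩(0,1)} (power set with product topology), is continuous, indeed a homeomorphic embedding. -/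
open Set Topology

open Classical in
/-- The (Boolean-valued) characteristic function of a set. -/
noncomputable def chi {α : Type*} (s : Set α) : α → Bool :=
  fun a => if a ∈ s then true else false

/-- The rationals in `(0,1)`. -/
def ratQ : Set ℝ := {r : ℝ | r ∈ Set.Ioo (0:ℝ) 1 ∧ ∃ q : ℚ, (q : ℝ) = r}

/-- The irrationals in `(0,1)`. -/
def irrX : Set ℝ := Set.Ioo (0:ℝ) 1 \ {r : ℝ | ∃ q : ℚ, (q : ℝ) = r}

/-- Given binary digits `d x`, `SxSet d x` is the set of nonzero finite truncations
`Σ_{k=0}^{n} i^x_k / 2^{k+1}` of the binary expansion of `x`. -/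
def SxSet (d : ℝ → ℕ → Bool) (x : ℝ) : Set ℝ :=
  {r : ℝ | ∃ n : ℕ, r = ∑ k ∈ Finset.range (n + 1),
    (cond (d x k) ((1:ℝ) / 2 ^ (k + 1)) 0)} \ {0}

/-! ### Auxiliary definitions and lemmas -/

/-- The `n`-th truncation of the binary expansion. -/
noncomputable def Tps (d : ℝ → ℕ → Bool) (x : ℝ) (n : ℕ) : ℝ :=
  ∑ k ∈ Finset.range (n + 1), (cond (d x k) ((1:ℝ) / 2 ^ (k + 1)) 0)

/-- The numerator of the `n`-th truncation over `2^(n+1)`. -/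
def Nps (d : ℝ → ℕ → Bool) (x : ℝ) (n : ℕ) : ℕ :=
  ∑ k ∈ Finset.range (n + 1), (cond (d x k) (2 ^ (n - k)) 0)

lemma mem_SxSet_iff' (d : ℝ → ℕ → Bool) (x r : ℝ) :
    r ∈ SxSet d x ↔ (∃ n : ℕ, r = Tps d x n) ∧ r ≠ 0 := by
  simp [SxSet, Tps, Set.mem_diff]

lemma Tps_eq (d : ℝ → ℕ → Bool) (x : ℝ) (n : ℕ) :
    Tps d x n = (Nps d x n : ℝ) / 2 ^ (n + 1) := by
  unfold Tps Nps
  push_cast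
  rw [Finset.sum_div]
  refine Finset.sum_congr rfl fun k hk => ?_
  have hk' : k ≤ n := Nat.lt_succ_iff.mp (Finset.mem_range.mp hk)
  cases d x k
  · simp
  · simp only [Bool.cond_true]
    rw [div_eq_div_iff (by positivity) (by positivity), one_mul]
    push_cast
    rw [← pow_add]
    congr 1
    omega

lemma Nps_odd (d : ℝ → ℕ → Bool) (x : ℝ) (n : ℕ) (h : d x n = true) :
    Odd (Nps d x n) := by
  unfold Nps
  rw [Finset.sum_range_succ, h]
  simp only [Bool.cond_true, Nat.sub_self, pow_zero]
  have heven : 2 ∣ ∑ k ∈ Finset.range n, cond (d x k) (2 ^ (n - k)) 0 := by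
    refine Finset.dvd_sum fun k hk => ?_
    have hk' : k < n := Finset.mem_range.mp hk
    cases d x k
    · simp
    · simp only [Bool.cond_true]
      exact dvd_pow_self 2 (by omega)
  obtain ⟨c, hc⟩ := heven
  exact ⟨c, by omega⟩

lemma summable_digits (d : ℝ → ℕ → Bool) (x : ℝ) :
    Summable (fun k : ℕ => cond (d x k) ((1:ℝ) / 2 ^ (k + 1)) 0) := by
  refine Summable.of_nonneg_of_le (fun k => ?_) (fun k => ?_)
    (summable_geometric_two.mul_left (1/2))
  · cases d x k <;> simp <;> positivity
  · cases d x k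
    · simp only [Bool.cond_false]
      positivity
    · simp only [Bool.cond_true]
      rw [← one_div_pow, pow_succ, mul_comm]

lemma Nps_pos (d : ℝ → ℕ → Bool) (x : ℝ) (n : ℕ) (h : d x n = true) :
    0 < Nps d x n :=
  (Nps_odd d x n h).pos

/-- The truncation is strictly below `x` and within `2^{-(n+1)}` of it. -/
lemma tail_bounds (d : ℝ → ℕ → Bool)
    (hd : ∀ x ∈ irrX, (x = ∑' k : ℕ, (cond (d x k) ((1:ℝ) / 2 ^ (k + 1)) 0)) ∧
      {k : ℕ | d x k = true}.Infinite)
    (x : ℝ) (hx : x ∈ irrX) (n : ℕ) :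
    Tps d x n < x ∧ x < Tps d x n + 1 / 2 ^ (n + 1) := by
  obtain ⟨hxe, hxinf⟩ := hd x hx
  set f : ℕ → ℝ := fun k => cond (d x k) ((1:ℝ) / 2 ^ (k + 1)) 0 with hf
  have hs : Summable f := summable_digits d x
  have hs' : Summable (fun k => f (k + (n + 1))) := (summable_nat_add_iff (n+1)).mpr hs
  have hsplit : Tps d x n + ∑' k, f (k + (n + 1)) = x := by
    conv_rhs => rw [hxe]
    exact Summable.sum_add_tsum_nat_add (n+1) hs
  have hnn : ∀ k, 0 ≤ f k := by
    intro k
    simp only [hf]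
    cases d x k <;> simp <;> positivity
  constructor
  · have hpos : 0 < ∑' k, f (k + (n + 1)) := by
      obtain ⟨k0, hk0mem, hk0gt⟩ := hxinf.exists_gt n
      refine Summable.tsum_pos hs' (fun i => hnn _) (k0 - (n+1)) ?_
      have hidx : k0 - (n+1) + (n+1) = k0 := by omega
      rw [hidx]
      simp only [hf, Set.mem_setOf_eq.mp hk0mem]
      simp only [Bool.cond_true]
      positivity
    linarith
  · have hle : ∑' k, f (k + (n + 1)) ≤ ∑' k : ℕ, ((1:ℝ)/2) ^ (n + 2) * ((1:ℝ)/2) ^ k := by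
      refine Summable.tsum_le_tsum (fun k => ?_) hs' (summable_geometric_two.mul_left _)
      simp only [hf]
      cases hc : d x (k + (n + 1))
      · simp only [Bool.cond_false]
        positivity
      · simp only [Bool.cond_true]
        rw [← pow_add, ← one_div_pow]
        apply le_of_eq
        congr 1
        omega
    have hrhs : ∑' k : ℕ, ((1:ℝ)/2) ^ (n + 2) * ((1:ℝ)/2) ^ k = 1 / 2 ^ (n + 1) := by
      rw [tsum_mul_left, tsum_geometric_two, one_div_pow]
      rw [show (n + 2 : ℕ) = (n + 1) + 1 from rfl, pow_succ]
      ring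
    have hne : x ≠ Tps d x n + 1 / 2 ^ (n + 1) := by
      intro hcon
      refine hx.2 ⟨(Nps d x n : ℚ) / 2 ^ (n + 1) + 1 / 2 ^ (n + 1), ?_⟩
      have hcast : (((Nps d x n : ℚ) / 2 ^ (n + 1) + 1 / 2 ^ (n + 1) : ℚ) : ℝ)
          = Tps d x n + 1 / 2 ^ (n + 1) := by
        rw [Tps_eq]
        push_cast
        ring
      rw [hcast]
      exact hcon.symm
    have hle' : x ≤ Tps d x n + 1 / 2 ^ (n + 1) := by
      have h2 := hle.trans_eq hrhs
      linarith [hsplit]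
    exact lt_of_le_of_ne hle' hne

/-- Key characterization: for an odd dyadic `a/2^{m+1}`, membership in `S_y` is equivalent
to `y` lying in the open dyadic interval of length `2^{-(m+1)}` above it. -/
lemma mem_SxSet_iff (d : ℝ → ℕ → Bool)
    (hd : ∀ x ∈ irrX, (x = ∑' k : ℕ, (cond (d x k) ((1:ℝ) / 2 ^ (k + 1)) 0)) ∧
      {k : ℕ | d x k = true}.Infinite)
    (y : ℝ) (hy : y ∈ irrX) (a m : ℕ) (ha : Odd a) :
    (a : ℝ) / 2 ^ (m + 1) ∈ SxSet d y ↔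
      ((a : ℝ) / 2 ^ (m + 1) < y ∧ y < (a : ℝ) / 2 ^ (m + 1) + 1 / 2 ^ (m + 1)) := by
  constructor
  · intro hmem
    obtain ⟨⟨n, hn⟩, h0⟩ := (mem_SxSet_iff' d y _).mp hmem
    rw [Tps_eq] at hn
    have hnat : a * 2 ^ (n + 1) = Nps d y n * 2 ^ (m + 1) := by
      have := (div_eq_div_iff (by positivity : (0:ℝ) < 2 ^ (m+1)).ne'
        (by positivity : (0:ℝ) < 2 ^ (n+1)).ne').mp hn
      exact_mod_cast this
    have hmn : m ≤ n := by
      by_contra hcon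
      push_neg at hcon
      have h2 : 2 ^ (m + 1) = 2 ^ (n + 1) * 2 ^ (m - n) := by
        rw [← pow_add]; congr 1; omega
      rw [h2, ← mul_assoc, mul_assoc, mul_comm ((2:ℕ) ^ (n+1)) (2 ^ (m - n)),
        ← mul_assoc] at hnat
      have ha' : a = Nps d y n * 2 ^ (m - n) :=
        Nat.eq_of_mul_eq_mul_right (by positivity) hnat
      have : Even a := by
        rw [ha']
        exact (Nat.even_pow.mpr ⟨even_two, by omega⟩).mul_left _
      exact (Nat.not_even_iff_odd.mpr ha) this
    obtain ⟨hlo, hhi⟩ := tail_bounds d hd y hy n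
    rw [Tps_eq] at hlo hhi
    rw [← hn] at hlo hhi
    refine ⟨hlo, hhi.trans_le ?_⟩
    have : (1:ℝ) / 2 ^ (n + 1) ≤ 1 / 2 ^ (m + 1) := by
      apply one_div_le_one_div_of_le (by positivity)
      exact pow_le_pow_right₀ (by norm_num) (by omega)
    linarith
  · rintro ⟨h1, h2⟩
    obtain ⟨hlo, hhi⟩ := tail_bounds d hd y hy m
    rw [Tps_eq] at hlo hhi
    have hpow : (0:ℝ) < 2 ^ (m + 1) := by positivity
    have hab : a = Nps d y m := by
      have c1 : (a : ℝ) < Nps d y m + 1 := by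
        have hstep : (a : ℝ) / 2 ^ (m + 1) < ((Nps d y m : ℝ) + 1) / 2 ^ (m + 1) := by
          rw [add_div]
          linarith
        have h := mul_lt_mul_of_pos_right hstep hpow
        rwa [div_mul_cancel₀ _ hpow.ne', div_mul_cancel₀ _ hpow.ne'] at h
      have c2 : (Nps d y m : ℝ) < a + 1 := by
        have hstep : (Nps d y m : ℝ) / 2 ^ (m + 1) < ((a : ℝ) + 1) / 2 ^ (m + 1) := by
          rw [add_div]
          linarith
        have h := mul_lt_mul_of_pos_right hstep hpow
        rwa [div_mul_cancel₀ _ hpow.ne', div_mul_cancel₀ _ hpow.ne'] at h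
      have c1' : a < Nps d y m + 1 := by exact_mod_cast c1
      have c2' : Nps d y m < a + 1 := by exact_mod_cast c2
      omega
    rw [mem_SxSet_iff' d]
    refine ⟨⟨m, ?_⟩, ?_⟩
    · rw [Tps_eq, hab]
    · have : 0 < a := ha.pos
      positivity

/-- Every element of `S_y` is an odd dyadic rational. -/
lemma exists_odd_form (d : ℝ → ℕ → Bool)
    (hd : ∀ x ∈ irrX, (x = ∑' k : ℕ, (cond (d x k) ((1:ℝ) / 2 ^ (k + 1)) 0)) ∧
      {k : ℕ | d x k = true}.Infinite)
    (y : ℝ) (hy : y ∈ irrX) (r : ℝ) (hr : r ∈ SxSet d y) :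
    ∃ a m : ℕ, Odd a ∧ r = (a : ℝ) / 2 ^ (m + 1) := by
  obtain ⟨⟨n, hn⟩, h0⟩ := (mem_SxSet_iff' d y r).mp hr
  rw [Tps_eq] at hn
  have hN0 : Nps d y n ≠ 0 := by
    intro h
    apply h0
    rw [hn, h]
    simp
  obtain ⟨j, b, hb, hN⟩ := Nat.exists_eq_two_pow_mul_odd hN0
  have hlt : Nps d y n < 2 ^ (n + 1) := by
    have h1 := (tail_bounds d hd y hy n).1
    rw [Tps_eq] at h1
    have hy1 : y < 1 := hy.1.2
    have : (Nps d y n : ℝ) < 2 ^ (n + 1) := by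
      have := h1.trans hy1
      rw [div_lt_one (by positivity)] at this
      exact this
    exact_mod_cast this
  have hj : j ≤ n := by
    by_contra hcon
    push_neg at hcon
    have h1 : 2 ^ (n + 1) ≤ 2 ^ j := Nat.pow_le_pow_right (by norm_num) (by omega)
    have h2 : 2 ^ j ≤ 2 ^ j * b := Nat.le_mul_of_pos_right _ hb.pos
    omega
  refine ⟨b, n - j, hb, ?_⟩
  rw [hn, hN]
  have hexp : j + (n - j + 1) = n + 1 := by omega
  push_cast
  rw [div_eq_div_iff (by positivity : (0:ℝ) < 2 ^ (n + 1)).ne'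
    (by positivity : (0:ℝ) < 2 ^ (n - j + 1)).ne']
  rw [mul_comm ((2:ℝ)^j) (b:ℝ), mul_assoc, ← pow_add, hexp]

lemma chi_eq_true_iff {α : Type*} (s : Set α) (a : α) : chi s a = true ↔ a ∈ s := by
  by_cases h : a ∈ s <;> simp [chi, h]

lemma chi_eq_false_iff {α : Type*} (s : Set α) (a : α) : chi s a = false ↔ a ∉ s := by
  by_cases h : a ∈ s <;> simp [chi, h]

/-- Find a `1`-digit of `x` giving an interval of length less than `ε`. -/
lemma exists_good_index (d : ℝ → ℕ → Bool)
    (hd : ∀ x ∈ irrX, (x = ∑' k : ℕ, (cond (d x k) ((1:ℝ) / 2 ^ (k + 1)) 0)) ∧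
      {k : ℕ | d x k = true}.Infinite)
    (x : ℝ) (hx : x ∈ irrX) {ε : ℝ} (hε : 0 < ε) :
    ∃ k : ℕ, d x k = true ∧ (1:ℝ) / 2 ^ (k + 1) < ε := by
  obtain ⟨n, hn⟩ := exists_pow_lt_of_lt_one hε (by norm_num : (1:ℝ)/2 < 1)
  obtain ⟨k, hkmem, hkgt⟩ := (hd x hx).2.exists_gt n
  refine ⟨k, hkmem, lt_of_le_of_lt ?_ hn⟩
  rw [← one_div_pow]
  exact pow_le_pow_of_le_one (by norm_num) (by norm_num) (by omega)

/-- The truncation at a `1`-digit is a rational in `(0,1)`. -/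
lemma Tps_mem_ratQ (d : ℝ → ℕ → Bool)
    (hd : ∀ x ∈ irrX, (x = ∑' k : ℕ, (cond (d x k) ((1:ℝ) / 2 ^ (k + 1)) 0)) ∧
      {k : ℕ | d x k = true}.Infinite)
    (x : ℝ) (hx : x ∈ irrX) (k : ℕ) (hk : d x k = true) :
    Tps d x k ∈ ratQ := by
  have hN := Nps_pos d x k hk
  refine ⟨⟨?_, ?_⟩, ⟨(Nps d x k : ℚ) / 2 ^ (k + 1), ?_⟩⟩
  · rw [Tps_eq]
    positivity
  · exact (tail_bounds d hd x hx k).1.trans hx.1.2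
  · rw [Tps_eq]
    push_cast
    ring

/-- If `d x` gives the binary expansion of `x` with infinitely many `1`s, then the map
`x ↦ S_x` from the irrationals of `(0,1)` into `2^Q` (where `Q = ℚ ∩ (0,1)`, and the
power set of `Q` is identified with the Cantor cube `2^Q`) is continuous, indeed a
homeomorphic embedding. -/
theorem stmt17 (d : ℝ → ℕ → Bool)
    (hd : ∀ x ∈ irrX, (x = ∑' k : ℕ, (cond (d x k) ((1:ℝ) / 2 ^ (k + 1)) 0)) ∧
      {k : ℕ | d x k = true}.Infinite) :
    Continuous (fun (x : ↥irrX) (q : ↥ratQ) => chi (SxSet d ↑x) (↑q : ℝ)) ∧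
    Topology.IsEmbedding (fun (x : ↥irrX) (q : ↥ratQ) => chi (SxSet d ↑x) (↑q : ℝ)) := by
  set F : ↥irrX → ↥ratQ → Bool := fun x q => chi (SxSet d ↑x) (↑q : ℝ) with hF
  -- Continuity
  have hcont : Continuous F := by
    refine continuous_pi fun q => ?_
    by_cases hq : ∃ a m : ℕ, Odd a ∧ (q : ℝ) = (a : ℝ) / 2 ^ (m + 1)
    · obtain ⟨a, m, ha, hqe⟩ := hq
      set qr : ℝ := (q : ℝ) with hqr
      set δ : ℝ := 1 / 2 ^ (m + 1) with hδ
      have hchar : ∀ x : ↥irrX, chi (SxSet d ↑x) qr = true ↔ (qr < ↑x ∧ ↑x < qr + δ) := by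
        intro x
        rw [chi_eq_true_iff, hqe]
        exact mem_SxSet_iff d hd ↑x x.2 a m ha
      have hirr : ∀ x : ↥irrX, (↑x : ℝ) ≠ qr ∧ (↑x : ℝ) ≠ qr + δ := by
        intro x
        obtain ⟨q', hq'⟩ := q.2.2
        constructor
        · intro hcon
          exact x.2.2 ⟨q', by rw [hq', hcon]⟩
        · intro hcon
          exact x.2.2 ⟨q' + 1 / 2 ^ (m + 1), by push_cast; rw [hq', hcon]⟩
      apply IsLocallyConstant.continuous
      rw [IsLocallyConstant.iff_exists_open]
      intro x
      rcases lt_trichotomy (↑x : ℝ) qr with hlt | heq | hgt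
      · refine ⟨Subtype.val ⁻¹' (Set.Iio qr), isOpen_Iio.preimage continuous_subtype_val,
          hlt, fun y hy => ?_⟩
        have hyv : (↑y : ℝ) < qr := hy
        have h1 : chi (SxSet d ↑y) qr = false := by
          rw [chi_eq_false_iff]
          intro hmem
          exact absurd (((hchar y).mp ((chi_eq_true_iff _ _).mpr hmem)).1) (by linarith)
        have h2 : chi (SxSet d ↑x) qr = false := by
          rw [chi_eq_false_iff]
          intro hmem
          exact absurd (((hchar x).mp ((chi_eq_true_iff _ _).mpr hmem)).1) (by linarith)
        show chi (SxSet d ↑y) qr = chi (SxSet d ↑x) qr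
        rw [h1, h2]
      · exact absurd heq (hirr x).1
      · rcases lt_trichotomy (↑x : ℝ) (qr + δ) with hlt2 | heq2 | hgt2
        · refine ⟨Subtype.val ⁻¹' (Set.Ioo qr (qr + δ)),
            isOpen_Ioo.preimage continuous_subtype_val, ⟨hgt, hlt2⟩, fun y hy => ?_⟩
          have h1 : chi (SxSet d ↑y) qr = true := (hchar y).mpr ⟨hy.1, hy.2⟩
          have h2 : chi (SxSet d ↑x) qr = true := (hchar x).mpr ⟨hgt, hlt2⟩
          show chi (SxSet d ↑y) qr = chi (SxSet d ↑x) qr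
          rw [h1, h2]
        · exact absurd heq2 (hirr x).2
        · refine ⟨Subtype.val ⁻¹' (Set.Ioi (qr + δ)), isOpen_Ioi.preimage continuous_subtype_val,
            hgt2, fun y hy => ?_⟩
          have hyv : qr + δ < (↑y : ℝ) := hy
          have h1 : chi (SxSet d ↑y) qr = false := by
            rw [chi_eq_false_iff]
            intro hmem
            exact absurd (((hchar y).mp ((chi_eq_true_iff _ _).mpr hmem)).2) (by linarith)
          have h2 : chi (SxSet d ↑x) qr = false := by
            rw [chi_eq_false_iff]
            intro hmem
            exact absurd (((hchar x).mp ((chi_eq_true_iff _ _).mpr hmem)).2) (by linarith)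
          show chi (SxSet d ↑y) qr = chi (SxSet d ↑x) qr
          rw [h1, h2]
    · have hconst : (fun x : ↥irrX => chi (SxSet d ↑x) (↑q : ℝ)) = fun _ => false := by
        funext x
        rw [chi_eq_false_iff]
        intro hmem
        exact hq (exists_odd_form d hd ↑x x.2 ↑q hmem)
      rw [show (fun x : ↥irrX => F x q) = (fun x : ↥irrX => chi (SxSet d ↑x) (↑q : ℝ)) from rfl,
        hconst]
      exact continuous_const
  refine ⟨hcont, ?_, ?_⟩
  · -- Inducing
    rw [isInducing_iff_nhds]
    intro x
    refine le_antisymm ((hcont.tendsto x).le_comap) ?_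
    intro U hU
    rw [Metric.mem_nhds_iff] at hU
    obtain ⟨ε, hε, hball⟩ := hU
    obtain ⟨k, hk, hkε⟩ := exists_good_index d hd ↑x x.2 hε
    set q : ℝ := Tps d ↑x k with hq
    have hqQ : q ∈ ratQ := Tps_mem_ratQ d hd ↑x x.2 k hk
    set Q : ↥ratQ := ⟨q, hqQ⟩ with hQ
    have hqodd : q = (Nps d ↑x k : ℝ) / 2 ^ (k + 1) := Tps_eq d ↑x k
    have hxmem : q ∈ SxSet d ↑x := by
      rw [hqodd]
      rw [mem_SxSet_iff d hd ↑x x.2 _ k (Nps_odd d ↑x k hk)]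
      have := tail_bounds d hd ↑x x.2 k
      rw [Tps_eq] at this
      exact this
    refine Filter.mem_comap.2 ⟨{g : ↥ratQ → Bool | g Q = true}, ?_, ?_⟩
    · refine IsOpen.mem_nhds ?_ ?_
      · have hset : {g : ↥ratQ → Bool | g Q = true}
            = (fun g : ↥ratQ → Bool => g Q) ⁻¹' {true} := by
          ext g
          simp
        rw [hset]
        exact (isOpen_discrete ({true} : Set Bool)).preimage (continuous_apply Q)
      · show F x Q = true
        exact (chi_eq_true_iff _ _).mpr hxmem
    · intro y hy
      have hymem : q ∈ SxSet d ↑y := (chi_eq_true_iff (SxSet d ↑y) q).mp hy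
      have hy2 : (↑y : ℝ) ∈ Set.Ioo q (q + 1 / 2 ^ (k + 1)) := by
        have := (mem_SxSet_iff d hd ↑y y.2 _ k (Nps_odd d ↑x k hk)).mp (hqodd ▸ hymem)
        rw [← hqodd] at this
        exact this
      have hx2 : (↑x : ℝ) ∈ Set.Ioo q (q + 1 / 2 ^ (k + 1)) := by
        have := tail_bounds d hd ↑x x.2 k
        exact ⟨this.1, this.2⟩
      apply hball
      rw [Metric.mem_ball, Subtype.dist_eq, Real.dist_eq, abs_sub_lt_iff]
      obtain ⟨a1, a2⟩ := hy2
      obtain ⟨b1, b2⟩ := hx2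
      constructor <;> linarith
  · -- Injectivity
    intro x y hxy
    by_contra hne
    have hdpos : 0 < dist x y := dist_pos.2 hne
    obtain ⟨k, hk, hkε⟩ := exists_good_index d hd ↑x x.2 hdpos
    set q : ℝ := Tps d ↑x k with hq
    have hqQ : q ∈ ratQ := Tps_mem_ratQ d hd ↑x x.2 k hk
    have hqodd : q = (Nps d ↑x k : ℝ) / 2 ^ (k + 1) := Tps_eq d ↑x k
    have hxmem : q ∈ SxSet d ↑x := by
      rw [hqodd, mem_SxSet_iff d hd ↑x x.2 _ k (Nps_odd d ↑x k hk)]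
      have := tail_bounds d hd ↑x x.2 k
      rw [Tps_eq] at this
      exact this
    have hchi : F x ⟨q, hqQ⟩ = F y ⟨q, hqQ⟩ := congrFun hxy ⟨q, hqQ⟩
    have hymem : q ∈ SxSet d ↑y := by
      have hchiy : chi (SxSet d ↑y) q = true := by
        calc chi (SxSet d ↑y) q = F y ⟨q, hqQ⟩ := rfl
          _ = F x ⟨q, hqQ⟩ := hchi.symm
          _ = chi (SxSet d ↑x) q := rfl
          _ = true := (chi_eq_true_iff _ _).mpr hxmem
      exact (chi_eq_true_iff _ _).mp hchiy
    have hy2 : q < (↑y : ℝ) ∧ (↑y : ℝ) < q + 1 / 2 ^ (k + 1) := by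
      have := (mem_SxSet_iff d hd ↑y y.2 _ k (Nps_odd d ↑x k hk)).mp (hqodd ▸ hymem)
      rw [← hqodd] at this
      exact this
    have hx2 := tail_bounds d hd ↑x x.2 k
    rw [← hq] at hx2
    have : dist x y < dist x y := by
      calc dist x y = |(↑x : ℝ) - ↑y| := by rw [Subtype.dist_eq, Real.dist_eq]
        _ < 1 / 2 ^ (k + 1) := by
            rw [abs_sub_lt_iff]
            constructor <;> linarith [hy2.1, hy2.2, hx2.1, hx2.2]
        _ < dist x y := hkε
    exact lt_irrefl _ this
end

section
/- Let κ be an infinite cardinal with κ < κ^ω, and let A be an almost disjoint family of countably infinite subsets of κ with |A| = κ^ω. Then there is no bounded linear extension operator E : C(K_A') → C(K_A), where K_A' = A ∪ {∞} is the derived set of the generalized Mrówka space K_A. -/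
open Set

/-- A family of infinite subsets of `ω` is almost disjoint if any two distinct members
have finite intersection. -/
def IsAlmostDisjointFamily (𝒜 : Set (Set ℕ)) : Prop :=
  (∀ A ∈ 𝒜, A.Infinite) ∧ ∀ A ∈ 𝒜, ∀ B ∈ 𝒜, A ≠ B → (A ∩ B).Finite

/-- The underlying set of the Mrówka (Aleksandrov–Urysohn) space of an almost disjoint
family `𝒜` of subsets of `ι`: the points of `ι`, one point for each member of `𝒜`, and
the point at infinity. -/
def Mrowka (ι : Type*) (𝒜 : Set (Set ι)) : Type _ := ι ⊕ (↥𝒜 ⊕ Unit)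

namespace Mrowka
variable {ι : Type*} {𝒜 : Set (Set ι)}

/-- An isolated point `n ∈ ι` of the Mrówka space. -/
def pt (n : ι) : Mrowka ι 𝒜 := Sum.inl n

/-- The point of the Mrówka space corresponding to a member `A ∈ 𝒜`. -/
def mem (A : ↥𝒜) : Mrowka ι 𝒜 := Sum.inr (Sum.inl A)

/-- The point at infinity of the Mrówka space. -/
def infty : Mrowka ι 𝒜 := Sum.inr (Sum.inr ())

end Mrowka

/-- The Mrówka topology: points of `ι` are isolated, basic neighborhoods of `A ∈ 𝒜` are
`{A} ∪ (A \ F)` for finite `F`, and basic neighborhoods of `∞` are complements of compact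
subsets of `ι ∪ 𝒜`. -/
instance (ι : Type*) (𝒜 : Set (Set ι)) : TopologicalSpace (Mrowka ι 𝒜) :=
  TopologicalSpace.generateFrom
    ({U | ∃ n : ι, U = {Mrowka.pt n}} ∪
     {U | ∃ (A : ↥𝒜) (F : Finset ι),
        U = insert (Mrowka.mem A) (Mrowka.pt '' ((A : Set ι) \ ↑F))} ∪
     {U | ∃ (F : Finset ι) (G : Finset ↥𝒜),
        U = insert Mrowka.infty
          ((Mrowka.mem '' {A : ↥𝒜 | A ∉ G}) ∪
           (Mrowka.pt '' {n : ι | n ∉ F ∧ ∀ A ∈ G, n ∉ (A : Set ι)}))})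

/-- A family of countably infinite subsets of `ι` is almost disjoint if any two distinct
members have finite intersection. -/
def IsAlmostDisjointFamilyOfCountable {ι : Type*} (𝒜 : Set (Set ι)) : Prop :=
  (∀ A ∈ 𝒜, A.Infinite ∧ A.Countable) ∧ ∀ A ∈ 𝒜, ∀ B ∈ 𝒜, A ≠ B → (A ∩ B).Finite

/-!
Every `A ∈ 𝒜` is an isolated point of `K_𝒜'`, so its indicator `g_A` is continuous there. Since,
by almost disjointness, the points of `A` converge to `A` in `K_𝒜`, the extension `E g_A`, which equals `1` at `A`, exceeds
`1/2` at some `ξ_A ∈ A`. As `|ι| < |𝒜|`, a single point `ξ` serves infinitely many `A`; summing the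
`g_A` over `m` of them gives functions of norm at most `1` whose extensions are at least `m/2` at
`ξ`, contradicting the boundedness of `E`.
-/

open Filter Topology Function

namespace BoundedContinuousFunction

variable {X α : Type*} [TopologicalSpace X]

theorem norm_sum_indicator_le_one {s : α → Set X} (hs : ∀ a, IsClopen (s a))
    (hdisj : Pairwise (Disjoint on s)) (t : Finset α) :
    ‖∑ a ∈ t, indicator (s a) (hs a)‖ ≤ 1 := by
  refine (norm_le zero_le_one).2 fun x => ?_
  rw [sum_apply]
  simp only [indicator_apply]
  rw [← Finset.indicator_biUnion_apply t s (hdisj.set_pairwise _)]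
  exact norm_indicator_le_norm_self _ _ |>.trans (by simp)

end BoundedContinuousFunction

theorem ContinuousLinearMap.finite_setOf_lt_apply {F X α : Type*} [NormedAddCommGroup F]
    [NormedSpace ℝ F] [TopologicalSpace X] (E : F →L[ℝ] BoundedContinuousFunction X ℝ)
    {g : α → F} {C : ℝ} (hg : ∀ t : Finset α, ‖∑ a ∈ t, g a‖ ≤ C) (x : X) {ε : ℝ} (hε : 0 < ε) :
    {a | ε < E (g a) x}.Finite := by
  by_contra hinf
  obtain ⟨t, hts, hcard⟩ := Set.Infinite.exists_subset_card_eq hinf (⌈‖E‖ * C / ε⌉₊ + 1)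
  have hlower : (t.card : ℝ) * ε ≤ E (∑ a ∈ t, g a) x := by
    rw [map_sum, BoundedContinuousFunction.sum_apply, ← nsmul_eq_mul]
    exact Finset.card_nsmul_le_sum t _ _ fun a ha => (hts ha).le
  have hupper : E (∑ a ∈ t, g a) x ≤ ‖E‖ * C :=
    calc E (∑ a ∈ t, g a) x ≤ ‖E (∑ a ∈ t, g a)‖ :=
          (le_abs_self _).trans ((E _).norm_coe_le_norm x)
      _ ≤ ‖E‖ * ‖∑ a ∈ t, g a‖ := E.le_opNorm _
      _ ≤ ‖E‖ * C := by gcongr; exact hg t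
  have hceil : ‖E‖ * C / ε < t.card := by
    rw [hcard]; push_cast; exact (Nat.le_ceil _).trans_lt (lt_add_one _)
  rw [div_lt_iff₀ hε] at hceil
  linarith

theorem Set.eventually_cofinite_val_notMem {ι : Type*} {s t : Set ι} (h : (s ∩ t).Finite) :
    ∀ᶠ n : s in cofinite, (n : ι) ∉ t :=
  (h.preimage Subtype.val_injective.injOn).eventually_cofinite_notMem.mono
    fun n hn hnt => hn ⟨n.2, hnt⟩

namespace Mrowka

variable {ι : Type*} {𝒜 : Set (Set ι)}

abbrev derivedSet (ι : Type*) (𝒜 : Set (Set ι)) : Set (Mrowka ι 𝒜) := range mem ∪ {infty}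

theorem mem_injective : Injective (mem : 𝒜 → Mrowka ι 𝒜) :=
  fun _ _ h => Sum.inl_injective (Sum.inr_injective h)

theorem pt_ne_mem (n : ι) (A : 𝒜) : (pt n : Mrowka ι 𝒜) ≠ mem A := Sum.inl_ne_inr

theorem pt_ne_infty (n : ι) : (pt n : Mrowka ι 𝒜) ≠ infty := Sum.inl_ne_inr

theorem mem_ne_infty (A : 𝒜) : (mem A : Mrowka ι 𝒜) ≠ infty :=
  fun h => Sum.inl_ne_inr (Sum.inr_injective h)

theorem isOpen_singleton_pt (n : ι) : IsOpen ({pt n} : Set (Mrowka ι 𝒜)) :=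
  TopologicalSpace.isOpen_generateFrom_of_mem (.inl (.inl ⟨n, rfl⟩))

theorem isOpen_insert_mem (A : 𝒜) (F : Finset ι) :
    IsOpen (insert (mem A) (pt '' ((A : Set ι) \ F)) : Set (Mrowka ι 𝒜)) :=
  TopologicalSpace.isOpen_generateFrom_of_mem (.inl (.inr ⟨A, F, rfl⟩))

theorem isOpen_insert_infty (F : Finset ι) (G : Finset 𝒜) :
    IsOpen (insert infty (mem '' {A | A ∉ G} ∪ pt '' {n | n ∉ F ∧ ∀ A ∈ G, n ∉ (A : Set ι)}) :
      Set (Mrowka ι 𝒜)) :=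
  TopologicalSpace.isOpen_generateFrom_of_mem (.inr ⟨F, G, rfl⟩)

theorem isClosed_singleton_mem (A : 𝒜) : IsClosed ({mem A} : Set (Mrowka ι 𝒜)) := by
  refine isOpen_compl_iff.1 <| isOpen_iff_forall_mem_open.2 fun x hx => ?_
  rcases x with n | B | ⟨⟩
  · exact ⟨{pt n}, singleton_subset_iff.2 (pt_ne_mem n A), isOpen_singleton_pt n, rfl⟩
  · refine ⟨_, ?_, isOpen_insert_mem B ∅, mem_insert _ _⟩
    rintro _ (rfl | ⟨n, -, rfl⟩) (h : _ = mem A)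
    exacts [hx h, pt_ne_mem n A h]
  · refine ⟨_, ?_, isOpen_insert_infty ∅ {A}, mem_insert _ _⟩
    rintro _ (rfl | ⟨B, hB, rfl⟩ | ⟨n, -, rfl⟩) h
    exacts [mem_ne_infty A h.symm, hB (by simp [mem_injective h]), pt_ne_mem n A h]

theorem isClopen_setOf_val_eq_mem (A : 𝒜) :
    IsClopen {x : derivedSet ι 𝒜 | (x : Mrowka ι 𝒜) = mem A} := by
  refine ⟨(isClosed_singleton_mem A).preimage continuous_subtype_val, ?_⟩
  convert (isOpen_insert_mem A ∅).preimage continuous_subtype_val using 1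
  ext ⟨x, hx⟩
  change x = mem A ↔ x = mem A ∨ x ∈ pt '' _
  refine (or_iff_left ?_).symm
  rintro ⟨n, -, rfl⟩
  rcases hx with ⟨B, hB⟩ | hx
  exacts [(pt_ne_mem n B hB.symm).elim, (pt_ne_infty n hx).elim]

theorem pairwise_disjoint_setOf_val_eq_mem :
    Pairwise (Disjoint on fun A : 𝒜 => {x : derivedSet ι 𝒜 | (x : Mrowka ι 𝒜) = mem A}) :=
  fun _ _ hAB => disjoint_left.2 fun _ hA hB => hAB (mem_injective (hA.symm.trans hB))

theorem tendsto_pt_nhds_mem (h𝒜 : ∀ A ∈ 𝒜, ∀ B ∈ 𝒜, A ≠ B → (A ∩ B).Finite) (A : 𝒜) :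
    Tendsto (fun n : (A : Set ι) => (pt n : Mrowka ι 𝒜)) cofinite (𝓝 (mem A)) := by
  rw [TopologicalSpace.nhds_generateFrom]
  simp only [tendsto_iInf, tendsto_principal]
  rintro s ⟨hAs, (⟨n, rfl⟩ | ⟨B, F, rfl⟩) | ⟨F, G, rfl⟩⟩
  · exact (pt_ne_mem n A (mem_singleton_iff.1 hAs).symm).elim
  · obtain rfl : A = B := by
      rcases hAs with h | ⟨n, -, h⟩
      exacts [mem_injective h, (pt_ne_mem n A h).elim]
    filter_upwards [eventually_cofinite_val_notMem (F.finite_toSet.inter_of_right _)] with n hn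
    exact mem_insert_of_mem _ ⟨n, ⟨n.2, hn⟩, rfl⟩
  · have hAG : A ∉ G := by
      rcases hAs with h | ⟨B, hB, h⟩ | ⟨n, -, h⟩
      exacts [(mem_ne_infty A h).elim, mem_injective h ▸ hB, (pt_ne_mem n A h).elim]
    have hB : ∀ B ∈ G, ∀ᶠ n : (A : Set ι) in cofinite, (n : ι) ∉ (B : Set ι) := fun B hB =>
      eventually_cofinite_val_notMem <| h𝒜 A A.2 B B.2 fun h => hAG (Subtype.ext h ▸ hB)
    filter_upwards [eventually_cofinite_val_notMem (F.finite_toSet.inter_of_right _),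
      (eventually_all_finset G).2 hB] with n hnF hnG
    exact mem_insert_of_mem _ (.inr ⟨n, ⟨hnF, hnG⟩, rfl⟩)

end Mrowka

open Mrowka in
/-- Let `κ` be an infinite cardinal with `κ < κ^ω` and let `𝒜` be an almost disjoint
family of countably infinite subsets of `κ` with `|𝒜| = κ^ω`. Then there is no bounded
linear extension operator from `C(K_𝒜')` to `C(K_𝒜)`, where `K_𝒜' = 𝒜 ∪ {∞}` is the
derived set of the generalized Mrówka space `K_𝒜`. -/
theorem stmt19 (ι : Type) [Infinite ι]
    (hκ : Cardinal.mk ι < Cardinal.mk ι ^ (Cardinal.aleph0 : Cardinal))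
    (𝒜 : Set (Set ι)) (h𝒜 : IsAlmostDisjointFamilyOfCountable 𝒜)
    (hcard : Cardinal.mk 𝒜 = Cardinal.mk ι ^ (Cardinal.aleph0 : Cardinal)) :
    ¬ ∃ E : (BoundedContinuousFunction
          (↥(Set.range (Mrowka.mem : ↥𝒜 → Mrowka ι 𝒜) ∪ {Mrowka.infty})) ℝ) →L[ℝ]
        (BoundedContinuousFunction (Mrowka ι 𝒜) ℝ),
      ∀ (g : BoundedContinuousFunction
          (↥(Set.range (Mrowka.mem : ↥𝒜 → Mrowka ι 𝒜) ∪ {Mrowka.infty})) ℝ)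
        (x : ↥(Set.range (Mrowka.mem : ↥𝒜 → Mrowka ι 𝒜) ∪ {Mrowka.infty})),
        E g (↑x) = g x := by
  rintro ⟨E, hE⟩
  let g (A : 𝒜) := BoundedContinuousFunction.indicator _ (isClopen_setOf_val_eq_mem A)
  have hξ (A : 𝒜) : ∃ n : ι, 1 / 2 < E (g A) (pt n) := by
    have hEA : E (g A) (mem A) = 1 := by
      simpa [g] using hE (g A) ⟨mem A, .inl ⟨A, rfl⟩⟩
    have := (h𝒜.1 A A.2).1.to_subtype
    have hlim : Tendsto (fun n : (A : Set ι) => E (g A) (pt n)) cofinite (𝓝 1) :=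
      hEA ▸ ((E (g A)).continuous.tendsto _).comp (tendsto_pt_nhds_mem h𝒜.2 A)
    obtain ⟨n, hn⟩ := (hlim.eventually_const_lt one_half_lt_one).exists
    exact ⟨n, hn⟩
  choose ξ hξ using hξ
  obtain ⟨i, hi⟩ := Cardinal.exists_infinite_fiber' ξ (hcard ▸ hκ)
  have hsum (t : Finset 𝒜) : ‖∑ A ∈ t, g A‖ ≤ 1 :=
    BoundedContinuousFunction.norm_sum_indicator_le_one _ pairwise_disjoint_setOf_val_eq_mem t
  refine (E.finite_setOf_lt_apply hsum (pt i) one_half_pos).not_infinite <|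
    (infinite_coe_iff.1 hi).mono fun A hA => ?_
  exact (mem_singleton_iff.1 hA) ▸ hξ A
end
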